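/- Suppose (s₁,s₂,z₁,z₂) lies in the open set where all five exponentials e^{2πi(s₂−1)−2πi(z₁+z₂)}, e^{2πi(s₂−1)−2πi z₂}, e^{2πi z₂}, e^{2πi(z₁+z₂)}, e^{2πi z₁} avoid the ray [1,∞), and suppose (z₁,z₂) is a critical point of Φ^{+(s₁,s₂)}, i.e. ∂Φ^{+(s₁,s₂)}/∂z₁ = ∂Φ^{+(s₁,s₂)}/∂z₂ = 0 at (z₁,z₂). Then, setting Z = e^{2πi z₁}, W = e^{2πi z₂}, U = (ZW)^{−1}, B₁ = e^{2πi s₁}, B₂ = e^{2πi s₂}, the following algebraic equations hold: (1 − B₂U)(1 − U^{−1}) = B₁^{−1}B₂(1 − Z) and (1 − B₂U)(1 − U^{−1}) = B₂(1 − B₂W^{−1})(1 − W). -/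

import Mathlib

/-!
Differentiating the defining integral under the integral sign gives
`Li₂'(z) = -log (1 - z) / z`, hence `d/dw Li₂ (exp w) = -log (1 - exp w)`. So the two partial
derivatives of `Φ` are a linear term plus a signed sum of `log (1 - eᵢ)` over the exponentials
`eᵢ`. Exponentiating the critical point equations removes the branch of every logarithm, and
since `exp (2πi) = 1` the result only involves `Z, W, B₁, B₂`.
-/

open Real

/-- The dilogarithm `Li₂(z) = -∫₀¹ log(1 - t z)/t dt` (principal branch of `log`). -/
noncomputable def Li2 (z : ℂ) : ℂ :=
  -∫ t in (0:ℝ)..1, Complex.log (1 - (t:ℂ) * z) / (t:ℂ)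

/-- `z` avoids the ray `[1,∞) ⊆ ℂ`. -/
def OffRay (z : ℂ) : Prop := ¬(z.im = 0 ∧ 1 ≤ z.re)

/-- The potential function `Φ^{ε(s₁,s₂)}(z₁,z₂)` of the Whitehead link, where `ε = 1`
gives `Φ^{+(s₁,s₂)}` and `ε = -1` gives `Φ^{-(s₁,s₂)}`. -/
noncomputable def PhiS (ε s₁ s₂ z₁ z₂ : ℂ) : ℂ :=
  (1 / (2 * (π:ℂ) * Complex.I)) *
    (ε * (2*(π:ℂ)*Complex.I*(s₁ - 1)) * (2*(π:ℂ)*Complex.I*(z₁ - 1/2))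
     - (2*(π:ℂ)*Complex.I*(s₂ - 1)) * (2*(π:ℂ)*Complex.I*z₁ + 2*(π:ℂ)*Complex.I*z₂)
     + Li2 (Complex.exp (2*(π:ℂ)*Complex.I*(s₂ - 1) - 2*(π:ℂ)*Complex.I*z₁
            - 2*(π:ℂ)*Complex.I*z₂))
     - Li2 (Complex.exp (2*(π:ℂ)*Complex.I*(s₂ - 1) - 2*(π:ℂ)*Complex.I*z₂))
     + Li2 (Complex.exp (2*(π:ℂ)*Complex.I*z₂))
     - Li2 (Complex.exp (2*(π:ℂ)*Complex.I*(z₁ + z₂)))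
     + Li2 (Complex.exp (2*(π:ℂ)*Complex.I*z₁)))

open Complex MeasureTheory intervalIntegral Set

lemma offRay_iff_one_sub_mem_slitPlane {z : ℂ} : OffRay z ↔ 1 - z ∈ slitPlane := by
  rw [OffRay, mem_slitPlane_iff, sub_re, sub_im, one_re, one_im, zero_sub, neg_ne_zero, sub_pos,
    not_and_or, not_le, or_comm]

lemma OffRay.one_sub_ne_zero {z : ℂ} (hz : OffRay z) : 1 - z ≠ 0 :=
  slitPlane_ne_zero (offRay_iff_one_sub_mem_slitPlane.1 hz)

lemma OffRay.ofReal_mul {z : ℂ} (hz : OffRay z) {t : ℝ} (ht₀ : 0 ≤ t) (ht₁ : t ≤ 1) :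
    OffRay (t * z) := by
  rintro ⟨him, hre⟩
  simp only [re_ofReal_mul, im_ofReal_mul, mul_eq_zero] at him hre
  have ht : 0 < t := ht₀.lt_of_ne (by rintro rfl; linarith)
  exact hz ⟨him.resolve_left ht.ne', by nlinarith⟩

lemma OffRay.one_sub_ofReal_mul_mem_slitPlane {z : ℂ} (hz : OffRay z) {t : ℝ}
    (ht : t ∈ uIcc 0 1) : 1 - t * z ∈ slitPlane := by
  rw [uIcc_of_le zero_le_one] at ht
  exact offRay_iff_one_sub_mem_slitPlane.1 (hz.ofReal_mul ht.1 ht.2)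

lemma isOpen_setOf_offRay : IsOpen {z : ℂ | OffRay z} := by
  simp_rw [offRay_iff_one_sub_mem_slitPlane]
  exact isOpen_slitPlane.preimage (continuous_const.sub continuous_id)

lemma intervalIntegrable_log_one_sub_mul_div {z : ℂ} (hz : OffRay z) :
    IntervalIntegrable (fun t : ℝ => log (1 - t * z) / t) volume 0 1 := by
  set f : ℝ → ℂ := fun t => log (1 - t * z)
  have hf : ∀ t ∈ uIcc (0:ℝ) 1, DifferentiableAt ℝ f t := fun t ht =>
    ((((hasDerivAt_id t).ofReal_comp).mul_const z).const_sub 1).clog_real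
      (hz.one_sub_ofReal_mul_mem_slitPlane ht) |>.differentiableAt
  -- the integrand is the difference quotient of `f` at `0`, which extends continuously to `t = 0`
  have hslope : ContinuousOn (dslope f 0) (uIcc 0 1) := by
    intro t ht
    rcases eq_or_ne t 0 with rfl | ht0
    · exact (continuousAt_dslope_same.2 (hf 0 ht)).continuousWithinAt
    · exact ((continuousAt_dslope_of_ne ht0).2 (hf t ht).continuousAt).continuousWithinAt
  refine (intervalIntegrable_congr fun t ht => ?_).1 hslope.intervalIntegrable
  have ht0 : t ≠ 0 := (uIoc_of_le (zero_le_one' ℝ) ▸ ht).1.ne'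
  simp [dslope_of_ne f ht0, slope_def_module, f, div_eq_inv_mul]

lemma exists_norm_inv_one_sub_mul_le {K : Set ℂ} (hK : IsCompact K) (hKO : ∀ x ∈ K, OffRay x) :
    ∃ C, ∀ t ∈ Icc (0:ℝ) 1, ∀ x ∈ K, ‖(1 - t * x)⁻¹‖ ≤ C := by
  have hcont : ContinuousOn (fun p : ℝ × ℂ => (1 - p.1 * p.2)⁻¹) (Icc 0 1 ×ˢ K) :=
    (by fun_prop : Continuous fun p : ℝ × ℂ => 1 - p.1 * p.2).continuousOn.inv₀
      fun p hp => (hKO _ hp.2).ofReal_mul hp.1.1 hp.1.2 |>.one_sub_ne_zero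
  obtain ⟨C, hC⟩ := (isCompact_Icc.prod hK).exists_bound_of_continuousOn hcont
  exact ⟨C, fun t ht x hx => hC (t, x) ⟨ht, hx⟩⟩

lemma hasDerivAt_log_one_sub_mul_div {t : ℝ} (ht : t ≠ 0) {x : ℂ} (hx : OffRay (t * x)) :
    HasDerivAt (fun x : ℂ => log (1 - t * x) / t) (-(1 - t * x)⁻¹) x := by
  have h := ((((hasDerivAt_id x).const_mul (t:ℂ)).const_sub 1).clog
    (offRay_iff_one_sub_mem_slitPlane.1 hx)).div_const (t:ℂ)
  refine h.congr_deriv ?_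
  simp only [id, mul_one]
  field_simp [ofReal_ne_zero.2 ht, hx.one_sub_ne_zero]

lemma intervalIntegrable_inv_one_sub_mul {z : ℂ} (hz : OffRay z) :
    IntervalIntegrable (fun t : ℝ => (1 - t * z)⁻¹) volume 0 1 :=
  ((by fun_prop : Continuous fun t : ℝ => 1 - t * z).continuousOn.inv₀
    fun _ ht => slitPlane_ne_zero (hz.one_sub_ofReal_mul_mem_slitPlane ht)).intervalIntegrable

lemma integral_inv_one_sub_mul {z : ℂ} (hz : OffRay z) (hz0 : z ≠ 0) :
    ∫ t in (0:ℝ)..1, (1 - t * z)⁻¹ = -log (1 - z) / z := by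
  have hslit := fun t (ht : t ∈ uIcc (0:ℝ) 1) => hz.one_sub_ofReal_mul_mem_slitPlane ht
  have hderiv : ∀ t ∈ uIcc (0:ℝ) 1,
      HasDerivAt (fun s : ℝ => -log (1 - s * z) / z) (1 - t * z)⁻¹ t := fun t ht => by
    refine ((((((hasDerivAt_id t).ofReal_comp).mul_const z).const_sub 1).clog_real
      (hslit t ht)).neg.div_const z).congr_deriv ?_
    simp only [id, ofReal_one, one_mul]
    field_simp [slitPlane_ne_zero (hslit t ht)]
  rw [integral_eq_sub_of_hasDerivAt hderiv (intervalIntegrable_inv_one_sub_mul hz)]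
  simp

lemma hasDerivAt_Li2 {z : ℂ} (hz : OffRay z) (hz0 : z ≠ 0) :
    HasDerivAt Li2 (-log (1 - z) / z) z := by
  obtain ⟨ε, hε, hball⟩ := Metric.isOpen_iff.1 isOpen_setOf_offRay z hz
  have hcb : Metric.closedBall z (ε / 2) ⊆ {w | OffRay w} :=
    (Metric.closedBall_subset_ball (half_lt_self hε)).trans hball
  obtain ⟨C, hC⟩ := exists_norm_inv_one_sub_mul_le (isCompact_closedBall z (ε / 2)) hcb
  have key := intervalIntegral.hasDerivAt_integral_of_dominated_loc_of_deriv_le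
    (F := fun (x : ℂ) (t : ℝ) => log (1 - t * x) / t) (F' := fun x t => -(1 - t * x)⁻¹)
    (bound := fun _ => C) (Metric.ball_mem_nhds z (half_pos hε)) ?_
    (intervalIntegrable_log_one_sub_mul_div hz)
    (intervalIntegrable_inv_one_sub_mul hz).neg.aestronglyMeasurable_restrict_uIoc
    ?_ intervalIntegrable_const ?_
  · have h := key.2.neg
    rw [intervalIntegral.integral_neg, neg_neg, integral_inv_one_sub_mul hz hz0] at h
    exact h
  · filter_upwards [isOpen_setOf_offRay.mem_nhds hz] with x hx
    exact (intervalIntegrable_log_one_sub_mul_div hx).aestronglyMeasurable_restrict_uIoc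
  · refine ae_of_all _ fun t ht x hx => ?_
    rw [uIoc_of_le zero_le_one] at ht
    simpa only [norm_neg] using hC t (Ioc_subset_Icc_self ht) x (Metric.ball_subset_closedBall hx)
  · refine ae_of_all _ fun t ht x hx => ?_
    rw [uIoc_of_le zero_le_one] at ht
    exact hasDerivAt_log_one_sub_mul_div ht.1.ne'
      ((hcb (Metric.ball_subset_closedBall hx)).ofReal_mul ht.1.le ht.2)

lemma HasDerivAt.Li2_cexp {f : ℂ → ℂ} {f' x : ℂ} (hf : HasDerivAt f f' x)
    (h : OffRay (cexp (f x))) :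
    HasDerivAt (fun z => Li2 (cexp (f z))) (-Complex.log (1 - cexp (f x)) * f') x := by
  have hcomp := (hasDerivAt_Li2 h (Complex.exp_ne_zero _)).comp x hf.cexp
  exact hcomp.congr_deriv (by field_simp [Complex.exp_ne_zero])

local notation "τ" => 2 * (π : ℂ) * Complex.I

lemma hasDerivAt_PhiS_fst (ε s₁ s₂ z₁ z₂ : ℂ)
    (h1 : OffRay (cexp (τ * (s₂ - 1) - τ * (z₁ + z₂)))) (h4 : OffRay (cexp (τ * (z₁ + z₂))))
    (h5 : OffRay (cexp (τ * z₁))) :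
    HasDerivAt (fun z => PhiS ε s₁ s₂ z z₂)
      (ε * τ * (s₁ - 1) - τ * (s₂ - 1) + log (1 - cexp (τ * (s₂ - 1) - τ * (z₁ + z₂)))
        + log (1 - cexp (τ * (z₁ + z₂))) - log (1 - cexp (τ * z₁))) z₁ := by
  have hsplit : τ * (s₂ - 1) - τ * z₁ - τ * z₂ = τ * (s₂ - 1) - τ * (z₁ + z₂) := by ring
  have hz := hasDerivAt_id z₁
  have hT₁ := ((hz.sub_const (1 / 2)).const_mul τ).const_mul (ε * (τ * (s₁ - 1)))
  have hT₂ := ((hz.const_mul τ).add_const (τ * z₂)).const_mul (τ * (s₂ - 1))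
  have hL₁ := HasDerivAt.Li2_cexp
    (((hz.const_mul τ).const_sub (τ * (s₂ - 1))).sub_const (τ * z₂))
    (by simpa only [id, hsplit] using h1)
  have hL₄ := HasDerivAt.Li2_cexp ((hz.add_const z₂).const_mul τ) h4
  have hL₅ := HasDerivAt.Li2_cexp (hz.const_mul τ) h5
  have hsum := (hT₁.sub hT₂).add hL₁
    |>.sub (hasDerivAt_const z₁ (Li2 (cexp (τ * (s₂ - 1) - τ * z₂))))
    |>.add (hasDerivAt_const z₁ (Li2 (cexp (τ * z₂)))) |>.sub hL₄ |>.add hL₅ |>.const_mul (1 / τ)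
  refine hsum.congr_deriv ?_
  simp only [id, hsplit]
  field_simp [two_pi_I_ne_zero]
  ring

lemma hasDerivAt_PhiS_snd (ε s₁ s₂ z₁ z₂ : ℂ)
    (h1 : OffRay (cexp (τ * (s₂ - 1) - τ * (z₁ + z₂))))
    (h2 : OffRay (cexp (τ * (s₂ - 1) - τ * z₂))) (h3 : OffRay (cexp (τ * z₂)))
    (h4 : OffRay (cexp (τ * (z₁ + z₂)))) :
    HasDerivAt (fun z => PhiS ε s₁ s₂ z₁ z)
      (-τ * (s₂ - 1) + log (1 - cexp (τ * (s₂ - 1) - τ * (z₁ + z₂)))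
        + log (1 - cexp (τ * (z₁ + z₂)))
        - (log (1 - cexp (τ * (s₂ - 1) - τ * z₂)) + log (1 - cexp (τ * z₂)))) z₂ := by
  have hsplit : τ * (s₂ - 1) - τ * z₁ - τ * z₂ = τ * (s₂ - 1) - τ * (z₁ + z₂) := by ring
  have hz := hasDerivAt_id z₂
  have hT₂ := ((hz.const_mul τ).const_add (τ * z₁)).const_mul (τ * (s₂ - 1))
  have hL₁ := HasDerivAt.Li2_cexp ((hz.const_mul τ).const_sub (τ * (s₂ - 1) - τ * z₁))
    (by simpa only [id, hsplit] using h1)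
  have hL₂ := HasDerivAt.Li2_cexp ((hz.const_mul τ).const_sub (τ * (s₂ - 1))) h2
  have hL₃ := HasDerivAt.Li2_cexp (hz.const_mul τ) h3
  have hL₄ := HasDerivAt.Li2_cexp ((hz.const_add z₁).const_mul τ) h4
  have hsum := (hasDerivAt_const z₂ (ε * (τ * (s₁ - 1)) * (τ * (z₁ - 1 / 2)))).sub hT₂ |>.add hL₁
    |>.sub hL₂ |>.add hL₃ |>.sub hL₄ |>.add (hasDerivAt_const z₂ (Li2 (cexp (τ * z₁))))
    |>.const_mul (1 / τ)
  refine hsum.congr_deriv ?_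
  simp only [id, hsplit]
  field_simp [two_pi_I_ne_zero]
  ring

lemma PhiS_fst_critical {ε s₁ s₂ z₁ z₂ : ℂ}
    (h1 : OffRay (cexp (τ * (s₂ - 1) - τ * (z₁ + z₂)))) (h4 : OffRay (cexp (τ * (z₁ + z₂))))
    (h5 : OffRay (cexp (τ * z₁))) (hc : deriv (fun z => PhiS ε s₁ s₂ z z₂) z₁ = 0) :
    cexp (ε * τ * (s₁ - 1) - τ * (s₂ - 1)) * (1 - cexp (τ * (s₂ - 1) - τ * (z₁ + z₂)))
      * (1 - cexp (τ * (z₁ + z₂))) = 1 - cexp (τ * z₁) := by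
  have hlog := eq_of_sub_eq_zero ((hasDerivAt_PhiS_fst ε s₁ s₂ z₁ z₂ h1 h4 h5).deriv ▸ hc)
  rw [← Complex.exp_log h5.one_sub_ne_zero, ← hlog, Complex.exp_add, Complex.exp_add,
    Complex.exp_log h1.one_sub_ne_zero, Complex.exp_log h4.one_sub_ne_zero]

lemma PhiS_snd_critical {ε s₁ s₂ z₁ z₂ : ℂ}
    (h1 : OffRay (cexp (τ * (s₂ - 1) - τ * (z₁ + z₂))))
    (h2 : OffRay (cexp (τ * (s₂ - 1) - τ * z₂))) (h3 : OffRay (cexp (τ * z₂)))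
    (h4 : OffRay (cexp (τ * (z₁ + z₂)))) (hc : deriv (fun z => PhiS ε s₁ s₂ z₁ z) z₂ = 0) :
    cexp (-τ * (s₂ - 1)) * (1 - cexp (τ * (s₂ - 1) - τ * (z₁ + z₂)))
      * (1 - cexp (τ * (z₁ + z₂))) = (1 - cexp (τ * (s₂ - 1) - τ * z₂)) * (1 - cexp (τ * z₂)) := by
  have hlog := eq_of_sub_eq_zero ((hasDerivAt_PhiS_snd ε s₁ s₂ z₁ z₂ h1 h2 h3 h4).deriv ▸ hc)
  rw [← Complex.exp_log h2.one_sub_ne_zero, ← Complex.exp_log h3.one_sub_ne_zero,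
    ← Complex.exp_add, ← hlog, Complex.exp_add, Complex.exp_add,
    Complex.exp_log h1.one_sub_ne_zero, Complex.exp_log h4.one_sub_ne_zero]

lemma exp_two_pi_I_mul_sub_one (s : ℂ) : cexp (τ * (s - 1)) = cexp (τ * s) := by
  rw [mul_sub, mul_one, Complex.exp_sub, exp_two_pi_mul_I, div_one]

theorem stmt_10 (s₁ s₂ z₁ z₂ : ℂ)
    (h1 : OffRay (Complex.exp (2*(π:ℂ)*Complex.I*(s₂ - 1) - 2*(π:ℂ)*Complex.I*(z₁ + z₂))))
    (h2 : OffRay (Complex.exp (2*(π:ℂ)*Complex.I*(s₂ - 1) - 2*(π:ℂ)*Complex.I*z₂)))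
    (h3 : OffRay (Complex.exp (2*(π:ℂ)*Complex.I*z₂)))
    (h4 : OffRay (Complex.exp (2*(π:ℂ)*Complex.I*(z₁ + z₂))))
    (h5 : OffRay (Complex.exp (2*(π:ℂ)*Complex.I*z₁)))
    (hc1 : deriv (fun z => PhiS 1 s₁ s₂ z z₂) z₁ = 0)
    (hc2 : deriv (fun z => PhiS 1 s₁ s₂ z₁ z) z₂ = 0) :
    (1 - Complex.exp (2*(π:ℂ)*Complex.I*s₂) *
          (Complex.exp (2*(π:ℂ)*Complex.I*z₁) * Complex.exp (2*(π:ℂ)*Complex.I*z₂))⁻¹) *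
        (1 - ((Complex.exp (2*(π:ℂ)*Complex.I*z₁) * Complex.exp (2*(π:ℂ)*Complex.I*z₂))⁻¹)⁻¹) =
      (Complex.exp (2*(π:ℂ)*Complex.I*s₁))⁻¹ * Complex.exp (2*(π:ℂ)*Complex.I*s₂) *
        (1 - Complex.exp (2*(π:ℂ)*Complex.I*z₁)) ∧
    (1 - Complex.exp (2*(π:ℂ)*Complex.I*s₂) *
          (Complex.exp (2*(π:ℂ)*Complex.I*z₁) * Complex.exp (2*(π:ℂ)*Complex.I*z₂))⁻¹) *
        (1 - ((Complex.exp (2*(π:ℂ)*Complex.I*z₁) * Complex.exp (2*(π:ℂ)*Complex.I*z₂))⁻¹)⁻¹) =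
      Complex.exp (2*(π:ℂ)*Complex.I*s₂) *
        (1 - Complex.exp (2*(π:ℂ)*Complex.I*s₂) * (Complex.exp (2*(π:ℂ)*Complex.I*z₂))⁻¹) *
        (1 - Complex.exp (2*(π:ℂ)*Complex.I*z₂)) := by
  have hfst := PhiS_fst_critical h1 h4 h5 hc1
  have hsnd := PhiS_snd_critical h1 h2 h3 h4 hc2
  rw [one_mul, Complex.exp_sub, Complex.exp_sub, mul_add, Complex.exp_add,
    exp_two_pi_I_mul_sub_one, exp_two_pi_I_mul_sub_one] at hfst
  rw [neg_mul, Complex.exp_neg, Complex.exp_sub, Complex.exp_sub, mul_add, Complex.exp_add,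
    exp_two_pi_I_mul_sub_one] at hsnd
  have hB₁ := Complex.exp_ne_zero (τ * s₁)
  have hB₂ := Complex.exp_ne_zero (τ * s₂)
  have hZ := Complex.exp_ne_zero (τ * z₁)
  have hW := Complex.exp_ne_zero (τ * z₂)
  constructor
  · field_simp at hfst ⊢
    linear_combination hfst
  · field_simp at hsnd ⊢
    linear_combination hsnd
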